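/- arXiv:2604.20627 — 7 statements merged into one kernel-verified Lean document; each statement's English description precedes it below -/
import Mathlib

section
/- Let S be a type with layer function k : S → ℕ and discount γ ∈ ℝ with 0 < γ < 1. Let Φ : S → ℝ be layer-monotone (k s₁ ≤ k s₂ → Φ s₁ ≤ Φ s₂) and have layer gap Δ > 0 (k s₁ < k s₂ → Φ s₂ ≥ Φ s₁ + Δ), and let M : S → ℝ be layer-monotone. Let A be a type (actions) and F : S → A → S the deterministic transition map. Define the action cost M_act(s,a) := (1−γ)·Φ(F s a) + γ·M(F s a), so that the shaped reward is r^W(s,a,g) = −M_act(s,a). Then for every state s with k s ≥ 1, every shortest-path action a* with k (F s a*) = k s − 1, and every non-optimal action a_bad with k (F s a_bad) ≥ k s, one has M_act(s, a*) < M_act(s, a_bad); equivalently, the shaped reward is strictly maximized by the shortest-path action: r^W(s, a*, g) > r^W(s, a_bad, g). (Proposition 1, second part / Corollary: cost improvement of the optimal action.) -/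
/-- Proposition 1 (second part / Corollary A.1): the shaped reward
`r^W(s,a,g) = −((1−γ)Φ(F s a) + γ M(F s a))` is strictly maximized by the
shortest-path action, i.e. the action cost `M_act` is strictly smaller for it. -/
theorem cost_improvement_of_optimal_action {S A : Type*}
    (k : S → ℕ) (γ : ℝ) (hγ0 : 0 < γ) (hγ1 : γ < 1)
    (Φ : S → ℝ) (hΦmono : ∀ s₁ s₂, k s₁ ≤ k s₂ → Φ s₁ ≤ Φ s₂)
    (Δ : ℝ) (hΔ : 0 < Δ)
    (hgap : ∀ s₁ s₂, k s₁ < k s₂ → Φ s₁ + Δ ≤ Φ s₂)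
    (M : S → ℝ) (hMmono : ∀ s₁ s₂, k s₁ ≤ k s₂ → M s₁ ≤ M s₂)
    (F : S → A → S) :
    ∀ (s : S) (aStar aBad : A), 1 ≤ k s →
      k (F s aStar) = k s - 1 →
      k s ≤ k (F s aBad) →
      (1 - γ) * Φ (F s aStar) + γ * M (F s aStar)
        < (1 - γ) * Φ (F s aBad) + γ * M (F s aBad) := by
  intro s aStar aBad hk hStar hBad
  have hlt : k (F s aStar) < k (F s aBad) := by omega
  have hΦ := hgap _ _ hlt
  have hM := hMmono _ _ hlt.le
  nlinarith [mul_le_mul_of_nonneg_left hΦ (by linarith : (0:ℝ) ≤ 1 - γ),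
    mul_le_mul_of_nonneg_left hM hγ0.le, mul_pos (by linarith : (0:ℝ) < 1 - γ) hΔ]
end

section
/- Let S be a type with layer function k : S → ℕ and discount γ ∈ ℝ with 0 < γ < 1. Let Φ : S → ℝ be nonnegative, layer-monotone, and have layer gap Δ > 0. Let M : S → ℝ be nonnegative and layer-monotone. Let σ : S → S be a shortest-path successor map (k (σ s) = k s − 1 whenever k s ≥ 1, and σ s = s whenever k s = 0). Define the per-step optimal cost c(s) := (1−γ)·Φ(σ s) + γ·M(σ s) and the optimal value V(s) := −∑_{t=0}^{k s − 1} γ^t · c(σ^[t] s). Let A be a type and F : S → A → S a deterministic transition, and define the optimal action-value Q(s,a) := −((1−γ)·Φ(F s a) + γ·M(F s a)) + γ·V(F s a). Then for every state s with k s ≥ 1, every shortest-path action a* with k (F s a*) = k s − 1, and every action a_bad with k (F s a_bad) ≥ k s, we have Q(s, a*) > Q(s, a_bad). In particular, the greedy policy with respect to Q coincides with the optimal shortest-path policy π*. (Theorem 1 / Theorem A.1: equivalence of the Q-learning optimum and the shortest path.) -/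
/-- Theorem 1 / Theorem A.1: equivalence of the Q-learning optimum and the
shortest path.  The optimal action-value function `Q` induced by the shaped
reward `r^W(s,a,g) = −((1−γ)Φ(F s a) + γ M(F s a))` is strictly maximized by
shortest-path actions, so the greedy policy w.r.t. `Q` is the shortest-path
policy. -/
theorem greedy_Q_is_shortest_path {S A : Type*}
    (k : S → ℕ) (γ : ℝ) (hγ0 : 0 < γ) (hγ1 : γ < 1)
    (Φ : S → ℝ) (hΦnonneg : ∀ s, 0 ≤ Φ s)
    (hΦmono : ∀ s₁ s₂, k s₁ ≤ k s₂ → Φ s₁ ≤ Φ s₂)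
    (Δ : ℝ) (hΔ : 0 < Δ)
    (hgap : ∀ s₁ s₂, k s₁ < k s₂ → Φ s₁ + Δ ≤ Φ s₂)
    (M : S → ℝ) (hMnonneg : ∀ s, 0 ≤ M s)
    (hMmono : ∀ s₁ s₂, k s₁ ≤ k s₂ → M s₁ ≤ M s₂)
    (σ : S → S)
    (hσ : ∀ s, 1 ≤ k s → k (σ s) = k s - 1)
    (hσ0 : ∀ s, k s = 0 → σ s = s)
    (c : S → ℝ) (hc : ∀ s, c s = (1 - γ) * Φ (σ s) + γ * M (σ s))
    (V : S → ℝ)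
    (hV : ∀ s, V s = -(∑ t ∈ Finset.range (k s), γ ^ t * c (σ^[t] s)))
    (F : S → A → S)
    (Q : S → A → ℝ)
    (hQ : ∀ s a, Q s a = -((1 - γ) * Φ (F s a) + γ * M (F s a)) + γ * V (F s a)) :
    ∀ (s : S) (aStar aBad : A), 1 ≤ k s →
      k (F s aStar) = k s - 1 →
      k s ≤ k (F s aBad) →
      Q s aBad < Q s aStar := by
  intro s aStar aBad hks hkStar hkBad
  set cost : S → ℝ := fun x => (1 - γ) * Φ x + γ * M x with hcost
  have hcostnn : ∀ x, 0 ≤ cost x := by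
    intro x
    have h1 := hΦnonneg x
    have h2 := hMnonneg x
    simp only [hcost]
    nlinarith
  have hcostlt : ∀ x y, k x < k y → cost x < cost y := by
    intro x y hxy
    have h1 := hgap x y hxy
    have h2 := hMmono x y hxy.le
    simp only [hcost]
    nlinarith
  have kiter : ∀ (t : ℕ) (x : S), t ≤ k x → k (σ^[t] x) = k x - t := by
    intro t
    induction t with
    | zero => intro x _; simp
    | succ n ih =>
      intro x hx
      rw [Function.iterate_succ_apply']
      have h1 : n ≤ k x := Nat.le_of_succ_le hx
      have h2 := ih x h1
      have h3 : 1 ≤ k (σ^[n] x) := by omega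
      rw [hσ _ h3, h2]
      omega
  have hU : ∀ x, cost x - γ * V x
      = ∑ t ∈ Finset.range (k x + 1), γ ^ t * cost (σ^[t] x) := by
    intro x
    rw [hV, Finset.sum_range_succ']
    simp only [Function.iterate_zero, id_eq, pow_zero, one_mul]
    have h : ∀ t ∈ Finset.range (k x),
        γ ^ (t + 1) * cost (σ^[t + 1] x) = γ * (γ ^ t * c (σ^[t] x)) := by
      intro t _
      rw [hc, Function.iterate_succ_apply']
      ring
    rw [Finset.sum_congr rfl h, ← Finset.mul_sum]
    ring
  have key : ∀ x y, k x < k y →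
      ∑ t ∈ Finset.range (k x + 1), γ ^ t * cost (σ^[t] x)
        < ∑ t ∈ Finset.range (k y + 1), γ ^ t * cost (σ^[t] y) := by
    intro x y hxy
    have sub : Finset.range (k x + 1) ⊆ Finset.range (k y + 1) :=
      Finset.range_subset_range.mpr (by omega)
    calc ∑ t ∈ Finset.range (k x + 1), γ ^ t * cost (σ^[t] x)
        < ∑ t ∈ Finset.range (k x + 1), γ ^ t * cost (σ^[t] y) := by
          apply Finset.sum_lt_sum
          · intro i hi
            have hi' : i ≤ k x := by
              have := Finset.mem_range.mp hi; omega
            have hlt : k (σ^[i] x) < k (σ^[i] y) := by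
              rw [kiter i x hi', kiter i y (by omega)]; omega
            exact mul_le_mul_of_nonneg_left (hcostlt _ _ hlt).le
              (pow_nonneg hγ0.le i)
          · refine ⟨0, Finset.mem_range.mpr (by omega), ?_⟩
            simp only [pow_zero, one_mul, Function.iterate_zero, id_eq]
            exact hcostlt x y hxy
      _ ≤ ∑ t ∈ Finset.range (k y + 1), γ ^ t * cost (σ^[t] y) :=
          Finset.sum_le_sum_of_subset_of_nonneg sub
            (fun i _ _ => mul_nonneg (pow_nonneg hγ0.le i) (hcostnn _))
  have hlt : k (F s aStar) < k (F s aBad) := by omega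
  have := key _ _ hlt
  rw [← hU, ← hU] at this
  have hq1 := hQ s aStar
  have hq2 := hQ s aBad
  simp only [hcost] at this
  linarith [hq1, hq2, this]
end

section
/- Let E := EuclideanSpace ℝ (Fin d), g ∈ E, L ≥ 0, and let v : ℝ → E → E be a velocity field such that for every t ∈ [0,1] the map v t is Lipschitz with constant L, and such that all the integrands below are measurable in the appropriate variables. Let μ₀ be a probability measure on E (the base Gaussian), and suppose that for each x₀ ∈ E there is a curve ψ(x₀, ·) : ℝ → E with ψ(x₀, 0) = x₀, with derivative (d/dt) ψ(x₀, t) = v(t, ψ(x₀, t)) for all t ∈ [0,1], with t ↦ v(t, (1−t)·x₀ + t·g) continuous on [0,1], and with x₀ ↦ ψ(x₀, 1) measurable. Let ν := Measure.map (fun x₀ => ψ(x₀,1)) μ₀ be the model distribution at time 1. Then the squared Wasserstein-2 distance from δ_g to ν, expressed as W₂²(δ_g, ν) = ∫⁻ ‖y − g‖² dν(y), satisfies W₂²(δ_g, ν) ≤ exp(2L) · ∫⁻_{x₀} ( ∫⁻_{t ∈ (0,1)} ‖v(t, (1−t)·x₀ + t·g) − (g − x₀)‖² dt ) dμ₀(x₀),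 i.e., the squared Wasserstein-2 distance is upper bounded, up to the multiplicative constant C = e^{2L}, by the mean squared error between the velocity field of the model and the target velocity x₁ − x₀ with x₁ = g, averaged over x₀ ∼ μ₀ and t ∼ Unif([0,1]). (Proposition 2 in explicit coupling/flow form.) -/
/-!
Let `φ t = (1 - t) • x₀ + t • g` be the straight path and `e t = v t (φ t) - (g - x₀)` its
defect. The curve `φ + ∫₀ᵗ e` has derivative `v t (φ t)`, so it solves the ODE up to an error
`L ∫₀¹ ‖e‖`, and Grönwall's bound for approximate trajectories gives
`‖ψ x₀ 1 - g‖ ≤ e^L ∫₀¹ ‖e‖`. Squaring and Jensen's inequality on `[0, 1]` yield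
`‖ψ x₀ 1 - g‖² ≤ e^{2L} ∫₀¹ ‖e‖²`, and integrating over `x₀ ∼ μ₀` bounds `∫ ‖y - g‖² dν`
because `ν` is the push-forward of `μ₀` under `ψ(·, 1)`.
-/

open MeasureTheory Set Real Topology
open scoped NNReal

theorem gronwallBound_mul_eq (δ K ε x : ℝ) :
    gronwallBound δ K (K * ε) x = (δ + ε) * exp (K * x) - ε := by
  rcases eq_or_ne K 0 with rfl | hK
  · simp [gronwallBound_K0]
  · rw [gronwallBound_of_K_ne_0 hK]
    field_simp
    ring

theorem sq_integral_le_integral_sq {α : Type*} [MeasurableSpace α] {μ : Measure α}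
    [IsProbabilityMeasure μ] {f : α → ℝ} (hf : Integrable f μ)
    (hf2 : Integrable (fun x => f x ^ 2) μ) :
    (∫ x, f x ∂μ) ^ 2 ≤ ∫ x, f x ^ 2 ∂μ :=
  (even_two.convexOn_pow).map_integral_le (continuous_pow 2).continuousOn isClosed_univ
    (.of_forall fun _ => mem_univ _) hf hf2

section

variable {E : Type*} [NormedAddCommGroup E] [NormedSpace ℝ E]

theorem hasDerivWithinAt_Ici_integral_of_continuousOn [CompleteSpace E] {e : ℝ → E} {a b t : ℝ}
    (he : ContinuousOn e (Icc a b)) (ht : t ∈ Ico a b) :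
    HasDerivWithinAt (fun u => ∫ s in a..u, e s) (e t) (Ici t) t := by
  have hmem : Icc a b ∈ 𝓝[>] t := Icc_mem_nhdsGT_of_mem ht
  refine intervalIntegral.integral_hasDerivWithinAt_right
    ((he.mono (Icc_subset_Icc_right ht.2.le)).intervalIntegrable_of_Icc ht.1)
    ⟨Icc a b, hmem, he.aestronglyMeasurable measurableSet_Icc⟩
    ((he t (Ico_subset_Icc_self ht)).mono_of_mem_nhdsWithin hmem)

theorem norm_integral_le_integral_norm_of_mem_Icc {e : ℝ → E} {a b t : ℝ}
    (he : ContinuousOn e (Icc a b)) (ht : t ∈ Icc a b) :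
    ‖∫ s in a..t, e s‖ ≤ ∫ s in a..b, ‖e s‖ :=
  (intervalIntegral.norm_integral_le_integral_norm ht.1).trans <|
    intervalIntegral.integral_mono_interval le_rfl ht.1 ht.2
      (.of_forall fun _ => norm_nonneg _) (he.norm.intervalIntegrable_of_Icc (ht.1.trans ht.2))

theorem norm_sub_le_of_lipschitzWith_of_hasDerivWithinAt [CompleteSpace E] {v : ℝ → E → E}
    {K : ℝ≥0} {ψ φ φ' : ℝ → E} {a b : ℝ} (hab : a ≤ b)
    (hv : ∀ t ∈ Ico a b, LipschitzWith K (v t))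
    (hψ : ContinuousOn ψ (Icc a b))
    (hψ' : ∀ t ∈ Ico a b, HasDerivWithinAt ψ (v t (ψ t)) (Ici t) t)
    (hφ : ContinuousOn φ (Icc a b))
    (hφ' : ∀ t ∈ Ico a b, HasDerivWithinAt φ (φ' t) (Ici t) t)
    (he : ContinuousOn (fun t => v t (φ t) - φ' t) (Icc a b)) :
    ‖ψ b - φ b‖ ≤ (‖ψ a - φ a‖ + ∫ t in a..b, ‖v t (φ t) - φ' t‖) * exp (K * (b - a)) := by
  set e := fun t => v t (φ t) - φ' t
  set M := ∫ t in a..b, ‖e t‖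
  set I := fun u => ∫ t in a..u, e t
  have hI : ∀ t ∈ Icc a b, ‖I t‖ ≤ M := fun t ht =>
    norm_integral_le_integral_norm_of_mem_Icc he ht
  have hIc : ContinuousOn I (Icc a b) := by
    have := intervalIntegral.continuousOn_primitive_interval (μ := volume) (f := e) (a := a)
      (b := b) (by rw [uIcc_of_le hab]; exact he.integrableOn_Icc)
    rwa [uIcc_of_le hab] at this
  -- `φ + I` has derivative `v t (φ t)`, at distance at most `K * ‖I t‖` from `v t ((φ + I) t)`.
  have hcorr : ∀ t ∈ Ico a b, dist (φ' t + e t) (v t ((φ + I) t)) ≤ 0 + K * M := by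
    intro t ht
    have hlip := (hv t ht).dist_le_mul (φ t) (φ t + I t)
    simp only [e, Pi.add_apply, add_sub_cancel, zero_add]
    rw [dist_self_add_right] at hlip
    exact hlip.trans (mul_le_mul_of_nonneg_left (hI t (Ico_subset_Icc_self ht)) K.2)
  have hgron := dist_le_of_approx_trajectories_ODE_of_mem (s := fun _ => univ) (εf := 0)
    (fun t ht => (hv t ht).lipschitzOnWith) hψ hψ' (fun t _ => by simp) (fun _ _ => trivial)
    (hφ.add hIc) (fun t ht => (hφ' t ht).add (hasDerivWithinAt_Ici_integral_of_continuousOn he ht))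
    hcorr (fun _ _ => trivial) (δ := ‖ψ a - φ a‖) (by simp [I, dist_eq_norm]) b ⟨hab, le_rfl⟩
  simp only [zero_add, gronwallBound_mul_eq] at hgron
  calc ‖ψ b - φ b‖ ≤ dist (ψ b) ((φ + I) b) + ‖I b‖ := by
        rw [dist_eq_norm, Pi.add_apply, ← sub_sub]
        exact norm_le_norm_sub_add _ _
    _ ≤ (‖ψ a - φ a‖ + M) * exp (K * (b - a)) - M + M := add_le_add hgron (hI b ⟨hab, le_rfl⟩)
    _ = _ := sub_add_cancel _ _

theorem ofReal_sq_norm_sub_le_lintegral_linear_path [CompleteSpace E] {v : ℝ → E → E}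
    {K : ℝ≥0} {ψ : ℝ → E} {x₀ g : E}
    (hv : ∀ t ∈ Icc (0 : ℝ) 1, LipschitzWith K (v t))
    (hψ0 : ψ 0 = x₀)
    (hψ : ∀ t ∈ Icc (0 : ℝ) 1, HasDerivAt ψ (v t (ψ t)) t)
    (hcont : ContinuousOn (fun t : ℝ => v t ((1 - t) • x₀ + t • g)) (Icc 0 1)) :
    ENNReal.ofReal (‖ψ 1 - g‖ ^ 2) ≤ ENNReal.ofReal (exp (2 * K)) *
      ∫⁻ t in Ioo (0 : ℝ) 1, ENNReal.ofReal (‖v t ((1 - t) • x₀ + t • g) - (g - x₀)‖ ^ 2) := by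
  set ε := fun t : ℝ => ‖v t ((1 - t) • x₀ + t • g) - (g - x₀)‖
  have he : ContinuousOn (fun t : ℝ => v t ((1 - t) • x₀ + t • g) - (g - x₀)) (Icc 0 1) :=
    hcont.sub continuousOn_const
  have hpath (t : ℝ) : HasDerivAt (fun t : ℝ => (1 - t) • x₀ + t • g) (g - x₀) t := by
    simpa [sub_eq_neg_add] using
      (((hasDerivAt_id t).const_sub 1).smul_const x₀).fun_add ((hasDerivAt_id t).smul_const g)
  have hgron : ‖ψ 1 - g‖ ≤ (∫ t in Ioo 0 1, ε t) * exp K := by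
    simpa [hψ0, intervalIntegral.integral_of_le, integral_Ioc_eq_integral_Ioo] using
      norm_sub_le_of_lipschitzWith_of_hasDerivWithinAt zero_le_one
        (fun t ht => hv t (Ico_subset_Icc_self ht))
        (fun t ht => (hψ t ht).continuousAt.continuousWithinAt)
        (fun t ht => (hψ t (Ico_subset_Icc_self ht)).hasDerivWithinAt)
        (by fun_prop) (fun t _ => (hpath t).hasDerivWithinAt) he
  have : IsProbabilityMeasure (volume.restrict (Ioo (0 : ℝ) 1)) := ⟨by simp⟩
  have hε2 : IntegrableOn (fun t => ε t ^ 2) (Ioo 0 1) :=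
    ((he.norm.pow 2).integrableOn_Icc).mono_set Ioo_subset_Icc_self
  have hjensen := sq_integral_le_integral_sq
    ((he.norm.integrableOn_Icc).mono_set Ioo_subset_Icc_self) hε2
  calc ENNReal.ofReal (‖ψ 1 - g‖ ^ 2)
      ≤ ENNReal.ofReal (exp (2 * K) * ∫ t in Ioo 0 1, ε t ^ 2) := by
        refine ENNReal.ofReal_le_ofReal ?_
        calc ‖ψ 1 - g‖ ^ 2 ≤ ((∫ t in Ioo 0 1, ε t) * exp K) ^ 2 :=
              pow_le_pow_left₀ (norm_nonneg _) hgron 2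
          _ = exp (2 * K) * (∫ t in Ioo 0 1, ε t) ^ 2 := by
              rw [mul_pow, ← exp_nat_mul]; push_cast; ring
          _ ≤ exp (2 * K) * ∫ t in Ioo 0 1, ε t ^ 2 :=
              mul_le_mul_of_nonneg_left hjensen (exp_pos _).le
    _ = _ := by
        rw [ENNReal.ofReal_mul (exp_pos _).le,
          ofReal_integral_eq_lintegral_ofReal hε2 (.of_forall fun _ => sq_nonneg _)]

end

theorem wasserstein_le_flow_matching_mse_general {d : ℕ}
    (g : EuclideanSpace ℝ (Fin d)) (L : ℝ) (hL : 0 ≤ L)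
    (v : ℝ → EuclideanSpace ℝ (Fin d) → EuclideanSpace ℝ (Fin d))
    (hlip : ∀ t ∈ Set.Icc (0 : ℝ) 1, LipschitzWith L.toNNReal (v t))
    (μ₀ : Measure (EuclideanSpace ℝ (Fin d)))
    (ψ : EuclideanSpace ℝ (Fin d) → ℝ → EuclideanSpace ℝ (Fin d))
    (hψ0 : ∀ x₀, ψ x₀ 0 = x₀)
    (hderiv : ∀ x₀, ∀ t ∈ Set.Icc (0 : ℝ) 1, HasDerivAt (ψ x₀) (v t (ψ x₀ t)) t)
    (hcont : ∀ x₀, ContinuousOn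
      (fun t : ℝ => v t ((1 - t) • x₀ + t • g)) (Set.Icc (0 : ℝ) 1))
    (ν : Measure (EuclideanSpace ℝ (Fin d)))
    (hν : ν = Measure.map (fun x₀ => ψ x₀ 1) μ₀) :
    (∫⁻ y, ENNReal.ofReal (‖y - g‖ ^ 2) ∂ν)
      ≤ ENNReal.ofReal (Real.exp (2 * L)) *
        ∫⁻ x₀, (∫⁻ t in Set.Ioo (0 : ℝ) 1,
          ENNReal.ofReal (‖v t ((1 - t) • x₀ + t • g) - (g - x₀)‖ ^ 2)) ∂μ₀ := by
  have hK : (L.toNNReal : ℝ) = L := Real.coe_toNNReal L hL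
  subst hν
  calc (∫⁻ y, ENNReal.ofReal (‖y - g‖ ^ 2) ∂Measure.map (fun x₀ => ψ x₀ 1) μ₀)
      ≤ ∫⁻ x₀, ENNReal.ofReal (‖ψ x₀ 1 - g‖ ^ 2) ∂μ₀ := lintegral_map_le _ _
    _ ≤ ∫⁻ x₀, ENNReal.ofReal (Real.exp (2 * L)) * (∫⁻ t in Set.Ioo (0 : ℝ) 1,
          ENNReal.ofReal (‖v t ((1 - t) • x₀ + t • g) - (g - x₀)‖ ^ 2)) ∂μ₀ :=
        lintegral_mono fun x₀ => hK ▸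
          ofReal_sq_norm_sub_le_lintegral_linear_path hlip (hψ0 x₀) (hderiv x₀) (hcont x₀)
    _ = _ := lintegral_const_mul' _ _ ENNReal.ofReal_ne_top

/-- Proposition 2 (explicit coupling/flow form): the squared Wasserstein-2
distance `W₂²(δ_g, ν) = ∫⁻ ‖y − g‖² dν` from the goal Dirac to the model
distribution `ν = (ψ(·,1))_* μ₀` at time 1 of the flow of the velocity field
`v` is bounded by `e^{2L}` times the mean squared error between `v` along the
linear interpolation path and the target velocity `g − x₀`, averaged over
`x₀ ∼ μ₀` and `t ∼ Unif([0,1])`. -/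
theorem wasserstein_le_flow_matching_mse {d : ℕ}
    (g : EuclideanSpace ℝ (Fin d)) (L : ℝ) (hL : 0 ≤ L)
    (v : ℝ → EuclideanSpace ℝ (Fin d) → EuclideanSpace ℝ (Fin d))
    (hlip : ∀ t ∈ Set.Icc (0 : ℝ) 1, LipschitzWith L.toNNReal (v t))
    (hvmeas : Measurable fun p : ℝ × EuclideanSpace ℝ (Fin d) => v p.1 p.2)
    (μ₀ : Measure (EuclideanSpace ℝ (Fin d))) (hμ₀ : IsProbabilityMeasure μ₀)
    (ψ : EuclideanSpace ℝ (Fin d) → ℝ → EuclideanSpace ℝ (Fin d))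
    (hψ0 : ∀ x₀, ψ x₀ 0 = x₀)
    (hderiv : ∀ x₀, ∀ t ∈ Set.Icc (0 : ℝ) 1, HasDerivAt (ψ x₀) (v t (ψ x₀ t)) t)
    (hcont : ∀ x₀, ContinuousOn
      (fun t : ℝ => v t ((1 - t) • x₀ + t • g)) (Set.Icc (0 : ℝ) 1))
    (hψmeas : Measurable fun x₀ => ψ x₀ 1)
    (ν : Measure (EuclideanSpace ℝ (Fin d)))
    (hν : ν = Measure.map (fun x₀ => ψ x₀ 1) μ₀) :
    (∫⁻ y, ENNReal.ofReal (‖y - g‖ ^ 2) ∂ν)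
      ≤ ENNReal.ofReal (Real.exp (2 * L)) *
        ∫⁻ x₀, (∫⁻ t in Set.Ioo (0 : ℝ) 1,
          ENNReal.ofReal (‖v t ((1 - t) • x₀ + t • g) - (g - x₀)‖ ^ 2)) ∂μ₀ :=
  wasserstein_le_flow_matching_mse_general g L hL v hlip μ₀ ψ hψ0 hderiv hcont ν hν
end

section
/- Let S be a type with layer function k : S → ℕ and γ ∈ ℝ with 0 < γ < 1. Suppose Φ : S → ℝ is bounded and layer-monotone (k s₁ ≤ k s₂ → Φ s₁ ≤ Φ s₂), and fD : S → S is layer-order-preserving (k s₁ ≤ k s₂ → k (fD s₁) ≤ k (fD s₂)). Let M : S → ℝ be any bounded function satisfying the fixed-point equation M s = (1 − γ)·Φ(fD s) + γ·M(fD s) for all s ∈ S. Then M is layer-monotone: for all s₁, s₂ ∈ S, k s₁ ≤ k s₂ implies M s₁ ≤ M s₂. (Lemma A.1: layer monotonicity of the fixed point M^{π_D} of the Bellman evaluation operator; the abstract form of Proposition 1, first part.) -/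
/-- Lemma A.1 (abstract form of Proposition 1, first part): any bounded fixed
point `M` of the Bellman evaluation operator
`(T M)(s) = (1−γ)Φ(fD s) + γ M(fD s)` is layer-monotone, provided `Φ` is
bounded and layer-monotone and `fD` is layer-order-preserving. -/
theorem bellman_fixed_point_layer_monotone {S : Type*}
    (k : S → ℕ) (γ : ℝ) (hγ0 : 0 < γ) (hγ1 : γ < 1)
    (Φ : S → ℝ) (hΦbdd : ∃ B : ℝ, ∀ s, |Φ s| ≤ B)
    (hΦmono : ∀ s₁ s₂, k s₁ ≤ k s₂ → Φ s₁ ≤ Φ s₂)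
    (fD : S → S) (hfD : ∀ s₁ s₂, k s₁ ≤ k s₂ → k (fD s₁) ≤ k (fD s₂))
    (M : S → ℝ) (hMbdd : ∃ C : ℝ, ∀ s, |M s| ≤ C)
    (hMfix : ∀ s, M s = (1 - γ) * Φ (fD s) + γ * M (fD s)) :
    ∀ s₁ s₂, k s₁ ≤ k s₂ → M s₁ ≤ M s₂ := by
  obtain ⟨C, hC⟩ := hMbdd
  have key : ∀ n : ℕ, ∀ s₁ s₂, k s₁ ≤ k s₂ → M s₁ - M s₂ ≤ γ ^ n * (2 * C) := by
    intro n
    induction n with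
    | zero =>
      intro s₁ s₂ _
      have h1 := hC s₁
      have h2 := hC s₂
      simp only [pow_zero, one_mul]
      have := abs_le.mp h1
      have := abs_le.mp h2
      linarith [(abs_le.mp h1).2, (abs_le.mp h2).1]
    | succ n ih =>
      intro s₁ s₂ hk
      have hΦ : Φ (fD s₁) ≤ Φ (fD s₂) := hΦmono _ _ (hfD _ _ hk)
      have hM : M (fD s₁) - M (fD s₂) ≤ γ ^ n * (2 * C) := ih _ _ (hfD _ _ hk)
      have e1 := hMfix s₁
      have e2 := hMfix s₂
      have h1γ : (0:ℝ) ≤ 1 - γ := by linarith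
      have h := mul_le_mul_of_nonneg_left hM hγ0.le
      have hΦ' := mul_le_mul_of_nonneg_left hΦ h1γ
      have hp2 : γ * (M (fD s₁) - M (fD s₂)) = γ * M (fD s₁) - γ * M (fD s₂) := by ring
      have hp3 : γ * (γ ^ n * (2 * C)) = γ ^ (n + 1) * (2 * C) := by ring
      linarith
  intro s₁ s₂ hk
  by_contra h
  push_neg at h
  set ε := M s₁ - M s₂ with hε
  have hεpos : 0 < ε := by simp [hε]; linarith
  have hlim : Filter.Tendsto (fun n : ℕ => γ ^ n * (2 * C)) Filter.atTop (nhds 0) := by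
    simpa using (tendsto_pow_atTop_nhds_zero_of_lt_one hγ0.le hγ1).mul_const (2 * C)
  obtain ⟨n, hn⟩ := (hlim.eventually (gt_mem_nhds hεpos)).exists
  exact absurd (key n s₁ s₂ hk) (by linarith)
end

section
/- Let S be a type with layer function k : S → ℕ and γ ∈ ℝ with 0 < γ < 1. Let Φ : S → ℝ be nonnegative, layer-monotone, and have layer gap Δ > 0 (k s₁ < k s₂ → Φ s₂ ≥ Φ s₁ + Δ). Let M : S → ℝ be nonnegative and layer-monotone, and let σ : S → S be a shortest-path successor map (k (σ s) = k s − 1 whenever k s ≥ 1, and σ s = s whenever k s = 0). Define c(s) := (1−γ)·Φ(σ s) + γ·M(σ s) and the optimal value V(s) := −∑_{t=0}^{k s − 1} γ^t · c(σ^[t] s). Then for any states s₁, s₂ in adjacent layers with k s₂ = k s₁ + 1 (writing K := k s₂ ≥ 1), the optimal value function satisfies the layer gap V(s₁) − V(s₂) ≥ (1 − γ^{K−1})·Δ; in particular V(s₂) ≤ V(s₁). (Lemma A.2: layer-wise monotonicity of the optimal value function V*.) -/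
/-- Lemma A.2: layer-wise monotonicity of the optimal value function
`V(s) = −∑_{t<k s} γ^t c(σ^[t] s)`.  For states in adjacent layers
(`k s₂ = k s₁ + 1`, `K := k s₂`), `V(s₁) − V(s₂) ≥ (1 − γ^{K−1})·Δ`, and in
particular `V(s₂) ≤ V(s₁)`. -/
theorem optimal_value_layer_gap {S : Type*}
    (k : S → ℕ) (γ : ℝ) (hγ0 : 0 < γ) (hγ1 : γ < 1)
    (Φ : S → ℝ) (hΦnonneg : ∀ s, 0 ≤ Φ s)
    (hΦmono : ∀ s₁ s₂, k s₁ ≤ k s₂ → Φ s₁ ≤ Φ s₂)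
    (Δ : ℝ) (hΔ : 0 < Δ)
    (hgap : ∀ s₁ s₂, k s₁ < k s₂ → Φ s₁ + Δ ≤ Φ s₂)
    (M : S → ℝ) (hMnonneg : ∀ s, 0 ≤ M s)
    (hMmono : ∀ s₁ s₂, k s₁ ≤ k s₂ → M s₁ ≤ M s₂)
    (σ : S → S)
    (hσ : ∀ s, 1 ≤ k s → k (σ s) = k s - 1)
    (hσ0 : ∀ s, k s = 0 → σ s = s)
    (c : S → ℝ) (hc : ∀ s, c s = (1 - γ) * Φ (σ s) + γ * M (σ s))
    (V : S → ℝ)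
    (hV : ∀ s, V s = -(∑ t ∈ Finset.range (k s), γ ^ t * c (σ^[t] s))) :
    ∀ s₁ s₂ : S, k s₂ = k s₁ + 1 →
      (1 - γ ^ (k s₂ - 1)) * Δ ≤ V s₁ - V s₂ ∧ V s₂ ≤ V s₁ := by
  have hγ1' : 0 < 1 - γ := by linarith
  have hiter : ∀ (s : S) (t : ℕ), t ≤ k s → k (σ^[t] s) = k s - t := by
    intro s t
    induction t with
    | zero => simp
    | succ t ih =>
      intro ht
      rw [Function.iterate_succ_apply']
      have h1 : k (σ^[t] s) = k s - t := ih (Nat.le_of_succ_le ht)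
      have h2 : 1 ≤ k (σ^[t] s) := by omega
      rw [hσ _ h2, h1]
      omega
  have hcnonneg : ∀ s, 0 ≤ c s := by
    intro s
    rw [hc]
    have := hΦnonneg (σ s); have := hMnonneg (σ s); nlinarith
  intro s₁ s₂ hk
  set n := k s₁ with hn
  have hmain : (1 - γ ^ n) * Δ ≤ V s₁ - V s₂ := by
    rw [hV s₁, hV s₂, hk, Finset.sum_range_succ]
    -- V s₁ - V s₂ = ∑_{t<n} γ^t (c(σ^[t]s₂) - c(σ^[t]s₁)) + γ^n c(σ^[n] s₂)
    have hsum : ∀ t ∈ Finset.range n,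
        γ ^ t * (1 - γ) * Δ ≤ γ ^ t * c (σ^[t] s₂) - γ ^ t * c (σ^[t] s₁) := by
      intro t ht
      rw [Finset.mem_range] at ht
      have hka : k (σ^[t] s₁) = n - t := hiter s₁ t (by omega)
      have hkb : k (σ^[t] s₂) = n + 1 - t := by
        have := hiter s₂ t (by omega); rwa [hk] at this
      have hka1 : k (σ (σ^[t] s₁)) = n - t - 1 := by
        rw [hσ _ (by omega), hka]
      have hkb1 : k (σ (σ^[t] s₂)) = n - t := by
        rw [hσ _ (by omega), hkb]; omega
      have hΦd : Φ (σ (σ^[t] s₁)) + Δ ≤ Φ (σ (σ^[t] s₂)) :=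
        hgap _ _ (by omega)
      have hMd : M (σ (σ^[t] s₁)) ≤ M (σ (σ^[t] s₂)) :=
        hMmono _ _ (by omega)
      have hγt : 0 ≤ γ ^ t := le_of_lt (pow_pos hγ0 t)
      rw [hc (σ^[t] s₁), hc (σ^[t] s₂)]
      nlinarith [mul_le_mul_of_nonneg_left hΦd hγt, mul_le_mul_of_nonneg_left hMd (le_of_lt hγ0)]
    have hsum' : ∑ t ∈ Finset.range n, γ ^ t * (1 - γ) * Δ ≤
        ∑ t ∈ Finset.range n, (γ ^ t * c (σ^[t] s₂) - γ ^ t * c (σ^[t] s₁)) :=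
      Finset.sum_le_sum hsum
    have hgeom : ∑ t ∈ Finset.range n, γ ^ t * (1 - γ) * Δ = (1 - γ ^ n) * Δ := by
      rw [← Finset.sum_mul, ← Finset.sum_mul]
      have := geom_sum_mul γ n
      nlinarith [this]
    have hlast : 0 ≤ γ ^ n * c (σ^[n] s₂) :=
      mul_nonneg (le_of_lt (pow_pos hγ0 n)) (hcnonneg _)
    rw [Finset.sum_sub_distrib] at hsum'
    linarith [hsum', hgeom.symm.le]
  have hpow : γ ^ n ≤ 1 := pow_le_one₀ (le_of_lt hγ0) (le_of_lt hγ1)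
  have hKn : k s₂ - 1 = n := by omega
  rw [hKn]
  exact ⟨hmain, by nlinarith⟩
end

section
/- Let S be a type with layer function k : S → ℕ and γ ∈ ℝ with 0 < γ < 1. Let Φ : S → ℝ be nonnegative and layer-monotone, let M : S → ℝ be nonnegative and layer-monotone, and let σ : S → S be a shortest-path successor map (k (σ s) = k s − 1 whenever k s ≥ 1, and σ s = s whenever k s = 0). Define c(s) := (1−γ)·Φ(σ s) + γ·M(σ s) and V(s) := −∑_{t=0}^{k s − 1} γ^t · c(σ^[t] s). Then V is antitone with respect to the layer index: for all x, y ∈ S, k x ≤ k y implies V(y) ≤ V(x). (Monotonicity of the optimal value function across arbitrary layers, used in the proof of Theorem A.1.) -/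
/-- Monotonicity of the optimal value function across arbitrary layers (used
in the proof of Theorem A.1): `V(s) = −∑_{t<k s} γ^t c(σ^[t] s)` is antitone
with respect to the layer index. -/
theorem optimal_value_antitone_in_layer {S : Type*}
    (k : S → ℕ) (γ : ℝ) (hγ0 : 0 < γ) (hγ1 : γ < 1)
    (Φ : S → ℝ) (hΦnonneg : ∀ s, 0 ≤ Φ s)
    (hΦmono : ∀ s₁ s₂, k s₁ ≤ k s₂ → Φ s₁ ≤ Φ s₂)
    (M : S → ℝ) (hMnonneg : ∀ s, 0 ≤ M s)
    (hMmono : ∀ s₁ s₂, k s₁ ≤ k s₂ → M s₁ ≤ M s₂)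
    (σ : S → S)
    (hσ : ∀ s, 1 ≤ k s → k (σ s) = k s - 1)
    (hσ0 : ∀ s, k s = 0 → σ s = s)
    (c : S → ℝ) (hc : ∀ s, c s = (1 - γ) * Φ (σ s) + γ * M (σ s))
    (V : S → ℝ)
    (hV : ∀ s, V s = -(∑ t ∈ Finset.range (k s), γ ^ t * c (σ^[t] s))) :
    ∀ x y : S, k x ≤ k y → V y ≤ V x := by
  -- iterate layer formula
  have hk : ∀ (t : ℕ) (s : S), k (σ^[t] s) = k s - t := by
    intro t
    induction t with
    | zero => intro s; simp
    | succ n ih =>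
      intro s
      rw [Function.iterate_succ_apply']
      rcases Nat.eq_zero_or_pos (k (σ^[n] s)) with h0 | hpos
      · rw [ih] at h0
        rw [hσ0 _ (by rw [ih]; exact h0), ih]
        omega
      · rw [hσ _ hpos, ih]
        omega
  -- c nonneg
  have hcnn : ∀ s, 0 ≤ c s := by
    intro s
    rw [hc]
    have h1 : (0:ℝ) ≤ 1 - γ := by linarith
    exact add_nonneg (mul_nonneg h1 (hΦnonneg _)) (mul_nonneg hγ0.le (hMnonneg _))
  -- c layer-monotone
  have hcmono : ∀ s₁ s₂, k s₁ ≤ k s₂ → c s₁ ≤ c s₂ := by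
    intro s₁ s₂ h
    have hσle : k (σ s₁) ≤ k (σ s₂) := by
      rcases Nat.eq_zero_or_pos (k s₁) with h0 | hpos
      · rw [hσ0 _ h0, h0]; exact Nat.zero_le _
      · rw [hσ _ hpos, hσ _ (le_trans hpos h)]; omega
    rw [hc, hc]
    have h1 : (0:ℝ) ≤ 1 - γ := by linarith
    have := hΦmono _ _ hσle
    have := hMmono _ _ hσle
    nlinarith
  intro x y hxy
  rw [hV x, hV y, neg_le_neg_iff]
  calc ∑ t ∈ Finset.range (k x), γ ^ t * c (σ^[t] x)
      ≤ ∑ t ∈ Finset.range (k x), γ ^ t * c (σ^[t] y) := by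
        apply Finset.sum_le_sum
        intro t _
        apply mul_le_mul_of_nonneg_left _ (le_of_lt (pow_pos hγ0 t))
        apply hcmono
        rw [hk, hk]
        omega
    _ ≤ ∑ t ∈ Finset.range (k y), γ ^ t * c (σ^[t] y) := by
        apply Finset.sum_le_sum_of_subset_of_nonneg
        · exact Finset.range_subset_range.mpr hxy
        · intro t _ _
          exact mul_nonneg (le_of_lt (pow_pos hγ0 t)) (hcnn _)
end

section
/- Let E be a real Banach space, let x₀, g ∈ E, let L ≥ 0, and let v : ℝ → E → E be such that for every t ∈ [0,1] the map v t : E → E is Lipschitz with constant L, and t ↦ v(t, (1−t)·x₀ + t·g) is continuous on [0,1]. Suppose ψ : ℝ → E satisfies ψ 0 = x₀ and has derivative (d/dt) ψ(t) = v(t, ψ(t)) at every t ∈ [0,1]. Then the endpoint of the flow satisfies the Grönwall-type discrepancy bound ‖ψ(1) − g‖ ≤ exp(L) · ∫_0^1 ‖v(t, (1−t)·x₀ + t·g) − (g − x₀)‖ dt, i.e., the distance of the flow endpoint from g is controlled, up to the factor e^L, by the time-integrated deviation of the velocity field from the straight-line target velocity g − x₀ evaluated along the linear interpolation path. (Grönwall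 flow-discrepancy bound underlying Proposition 2.) -/
/-!
Along the straight path `φ t = (1 - t) • x₀ + t • g`, whose velocity is `g - x₀`, the Lipschitz
bound gives `‖δ'‖ ≤ L ‖δ‖ + ε` for `δ = ψ - φ`, with `ε t = ‖v t (φ t) - (g - x₀)‖` and
`δ 0 = 0`. For every `η > 0`, `B t = exp (L t) * (∫₀ᵗ ε + η t)` fences `‖δ‖`: wherever
`‖δ t‖ = B t`, we get `‖δ' t‖ ≤ L B t + ε t < L B t + exp (L t) (ε t + η) = B' t`, as
`exp (L t) ≥ 1`. Letting `η → 0` and taking `t = 1` gives the bound.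
-/

open Set Filter Topology

section
variable {a b : ℝ}

theorem ContinuousOn.hasDerivWithinAt_integral_Ici {ε : ℝ → ℝ} (hε : ContinuousOn ε (Icc a b))
    {x : ℝ} (hx : x ∈ Ico a b) :
    HasDerivWithinAt (fun t => ∫ s in a..t, ε s) (ε x) (Ici x) x := by
  have hIcc : Icc a b ∈ 𝓝[>] x := Icc_mem_nhdsGT_of_mem hx
  refine intervalIntegral.integral_hasDerivWithinAt_right (t := Ioi x)
    ((hε.mono ?_).intervalIntegrable) ?_
    ((hε x (Ico_subset_Icc_self hx)).mono_of_mem_nhdsWithin hIcc)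
  · rw [uIcc_of_le hx.1]; exact Icc_subset_Icc_right hx.2.le
  · exact (hε.stronglyMeasurableAtFilter_nhdsWithin measurableSet_Icc x).filter_mono
      (nhdsWithin_le_of_mem hIcc)

variable {E : Type*} [NormedAddCommGroup E] [NormedSpace ℝ E] {f f' : ℝ → E} {K : ℝ}
  {ε : ℝ → ℝ}

theorem norm_le_exp_mul_add_integral_add_of_norm_deriv_right_le (hf : ContinuousOn f (Icc a b))
    (hf' : ∀ x ∈ Ico a b, HasDerivWithinAt f (f' x) (Ici x) x) (hK : 0 ≤ K)
    (hε : ContinuousOn ε (Icc a b)) (hε₀ : ∀ x ∈ Ico a b, 0 ≤ ε x)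
    (bound : ∀ x ∈ Ico a b, ‖f' x‖ ≤ K * ‖f x‖ + ε x) {η : ℝ} (hη : 0 < η) :
    ∀ ⦃x⦄, x ∈ Icc a b →
      ‖f x‖ ≤ Real.exp (K * (x - a)) * (‖f a‖ + (∫ s in a..x, ε s) + η * (x - a)) := by
  set B : ℝ → ℝ := fun x => Real.exp (K * (x - a)) * (‖f a‖ + (∫ s in a..x, ε s) + η * (x - a))
  have hexp : ∀ x, HasDerivAt (fun x => Real.exp (K * (x - a))) (Real.exp (K * (x - a)) * K) x :=
    fun x => by simpa using (((hasDerivAt_id x).sub_const a).const_mul K).exp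
  have hprim : ContinuousOn (fun x => ∫ s in a..x, ε s) (Icc a b) := by
    rcases le_or_gt a b with hab | hab
    · exact (intervalIntegral.continuousOn_primitive_interval'
        (hε.intervalIntegrable_of_Icc hab) left_mem_uIcc).mono Icc_subset_uIcc
    · simp [Icc_eq_empty_of_lt hab]
  refine image_norm_le_of_norm_deriv_right_lt_deriv_boundary' hf hf'
    (B' := fun x => K * B x + Real.exp (K * (x - a)) * (ε x + η)) (by simp) ?_ ?_ ?_
  · exact (Continuous.continuousOn (by fun_prop)).mul
      ((continuousOn_const.add hprim).add (by fun_prop))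
  · intro x hx
    refine ((hexp x).hasDerivWithinAt.mul
      (((hε.hasDerivWithinAt_integral_Ici hx).const_add ‖f a‖).add
        (((hasDerivWithinAt_id x _).sub_const a).const_mul η))).congr_deriv ?_
    simp only [B, Pi.add_apply, id]
    ring
  · intro x hx hfx
    have hexp_ge : 1 ≤ Real.exp (K * (x - a)) :=
      Real.one_le_exp (mul_nonneg hK (sub_nonneg.2 hx.1))
    calc ‖f' x‖ ≤ K * ‖f x‖ + ε x := bound x hx
      _ = K * B x + ε x := by rw [hfx]
      _ < K * B x + (ε x + η) := by linarith
      _ ≤ K * B x + Real.exp (K * (x - a)) * (ε x + η) := by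
        gcongr; exact le_mul_of_one_le_left (by linarith [hε₀ x hx]) hexp_ge

theorem norm_le_exp_mul_add_integral_of_norm_deriv_right_le (hf : ContinuousOn f (Icc a b))
    (hf' : ∀ x ∈ Ico a b, HasDerivWithinAt f (f' x) (Ici x) x) (hK : 0 ≤ K)
    (hε : ContinuousOn ε (Icc a b)) (hε₀ : ∀ x ∈ Ico a b, 0 ≤ ε x)
    (bound : ∀ x ∈ Ico a b, ‖f' x‖ ≤ K * ‖f x‖ + ε x) :
    ∀ ⦃x⦄, x ∈ Icc a b → ‖f x‖ ≤ Real.exp (K * (x - a)) * (‖f a‖ + ∫ s in a..x, ε s) := by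
  intro x hx
  have hlim : Tendsto
      (fun η => Real.exp (K * (x - a)) * (‖f a‖ + (∫ s in a..x, ε s) + η * (x - a))) (𝓝[>] 0)
      (𝓝 (Real.exp (K * (x - a)) * (‖f a‖ + ∫ s in a..x, ε s))) := by
    have : Continuous fun η =>
        Real.exp (K * (x - a)) * (‖f a‖ + (∫ s in a..x, ε s) + η * (x - a)) := by
      fun_prop
    simpa using (this.tendsto 0).mono_left nhdsWithin_le_nhds
  exact ge_of_tendsto hlim <| eventually_nhdsWithin_of_forall fun η hη =>
    norm_le_exp_mul_add_integral_add_of_norm_deriv_right_le hf hf' hK hε hε₀ bound hη hx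

end

theorem gronwall_flow_discrepancy_general {E : Type*} [NormedAddCommGroup E]
    [NormedSpace ℝ E]
    (x₀ g : E) (L : ℝ) (hL : 0 ≤ L)
    (v : ℝ → E → E)
    (hlip : ∀ t ∈ Set.Icc (0 : ℝ) 1, LipschitzWith L.toNNReal (v t))
    (hcont : ContinuousOn
      (fun t : ℝ => v t ((1 - t) • x₀ + t • g)) (Set.Icc (0 : ℝ) 1))
    (ψ : ℝ → E) (hψ0 : ψ 0 = x₀)
    (hderiv : ∀ t ∈ Set.Icc (0 : ℝ) 1, HasDerivAt ψ (v t (ψ t)) t) :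
    ‖ψ 1 - g‖ ≤ Real.exp L *
      ∫ t in (0 : ℝ)..1, ‖v t ((1 - t) • x₀ + t • g) - (g - x₀)‖ := by
  set φ : ℝ → E := fun t => (1 - t) • x₀ + t • g
  have hφ : ∀ t, HasDerivAt φ (g - x₀) t := by
    have : ⇑(AffineMap.lineMap x₀ g : ℝ →ᵃ[ℝ] E) = φ :=
      funext (AffineMap.lineMap_apply_module x₀ g)
    exact fun t => this ▸ AffineMap.hasDerivAt_lineMap
  have hδ : ∀ t ∈ Icc (0 : ℝ) 1, HasDerivAt (fun t => ψ t - φ t) (v t (ψ t) - (g - x₀)) t :=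
    fun t ht => (hderiv t ht).sub (hφ t)
  have hbound : ∀ t ∈ Ico (0 : ℝ) 1,
      ‖v t (ψ t) - (g - x₀)‖ ≤ L * ‖ψ t - φ t‖ + ‖v t (φ t) - (g - x₀)‖ := fun t ht =>
    calc ‖v t (ψ t) - (g - x₀)‖ ≤ ‖v t (ψ t) - v t (φ t)‖ + ‖v t (φ t) - (g - x₀)‖ :=
          norm_sub_le_norm_sub_add_norm_sub _ _ _
      _ ≤ L * ‖ψ t - φ t‖ + ‖v t (φ t) - (g - x₀)‖ := by
          gcongr
          simpa [dist_eq_norm, hL] using (hlip t (Ico_subset_Icc_self ht)).dist_le_mul (ψ t) (φ t)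
  simpa [φ, hψ0] using norm_le_exp_mul_add_integral_of_norm_deriv_right_le
    (fun t ht => (hδ t ht).continuousAt.continuousWithinAt)
    (fun t ht => (hδ t (Ico_subset_Icc_self ht)).hasDerivWithinAt) hL
    (hcont.sub continuousOn_const).norm (fun _ _ => norm_nonneg _) hbound
    (right_mem_Icc.2 zero_le_one)

/-- Grönwall flow-discrepancy bound underlying Proposition 2: the distance of
the flow endpoint `ψ 1` from `g` is controlled, up to `e^L`, by the
time-integrated deviation of the velocity field from the straight-line target
velocity `g − x₀` along the linear interpolation path. -/
theorem gronwall_flow_discrepancy {E : Type*} [NormedAddCommGroup E]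
    [NormedSpace ℝ E] [CompleteSpace E]
    (x₀ g : E) (L : ℝ) (hL : 0 ≤ L)
    (v : ℝ → E → E)
    (hlip : ∀ t ∈ Set.Icc (0 : ℝ) 1, LipschitzWith L.toNNReal (v t))
    (hcont : ContinuousOn
      (fun t : ℝ => v t ((1 - t) • x₀ + t • g)) (Set.Icc (0 : ℝ) 1))
    (ψ : ℝ → E) (hψ0 : ψ 0 = x₀)
    (hderiv : ∀ t ∈ Set.Icc (0 : ℝ) 1, HasDerivAt ψ (v t (ψ t)) t) :
    ‖ψ 1 - g‖ ≤ Real.exp L *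
      ∫ t in (0 : ℝ)..1, ‖v t ((1 - t) • x₀ + t • g) - (g - x₀)‖ :=
  gronwall_flow_discrepancy_general x₀ g L hL v hlip hcont ψ hψ0 hderiv
end
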